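/- arXiv:2005.10596 — 4 statements merged into one kernel-verified Lean document; each statement's English description precedes it below -/
import Mathlib

section
/- Theorem 3: The chirality and shift operators commute and their product is the distance-parity operator: [γ₅⊗1]·[1⊗ξ₅] = [1⊗ξ₅]·[γ₅⊗1] = Γ_ε. -/
/-!
**Theorem 3**: the chirality operator `[γ₅⊗1]` and the shift operator `[1⊗ξ₅]`
commute, and their product is the distance-parity operator `Γ_ε = [γ₅⊗ξ₅]`.
-/

noncomputable section

open Matrix

/-- Corners of the 4-dimensional unit hypercube. -/
abbrev Corner : Type := Fin 4 → Fin 2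

/-- The antipodal corner `Ā`, with `Ā_μ = 1 − A_μ`. -/
def barC (A : Corner) : Corner := fun μ => 1 - A μ

/-- The sign `η₅(A) = (−1)^(A₁+A₃)`. -/
def eta5 (A : Corner) : ℂ := (-1 : ℂ) ^ ((A 0).val + (A 2).val)

/-- The sign `ζ₅(A) = (−1)^(A₂+A₄)`. -/
def zeta5 (A : Corner) : ℂ := (-1 : ℂ) ^ ((A 1).val + (A 3).val)

/-- The sign `ε(A) = (−1)^(A₁+A₂+A₃+A₄)`. -/
def eps (A : Corner) : ℂ :=
  (-1 : ℂ) ^ ((A 0).val + (A 1).val + (A 2).val + (A 3).val)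

/-- The chirality operator `[γ₅⊗1]`: the 48×48 block matrix whose `(A,B)` block
is `η₅(A) · u(A)` if `B = Ā` and `0` otherwise. -/
def chirality (u : Corner → Matrix (Fin 3) (Fin 3) ℂ) :
    Matrix (Corner × Fin 3) (Corner × Fin 3) ℂ :=
  Matrix.of fun p q => if q.1 = barC p.1 then eta5 p.1 * u p.1 p.2 q.2 else 0

/-- The shift operator `[1⊗ξ₅]`: the 48×48 block matrix whose `(A,B)` block
is `ζ₅(A) · u(A)` if `B = Ā` and `0` otherwise. -/
def shiftOp (u : Corner → Matrix (Fin 3) (Fin 3) ℂ) :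
    Matrix (Corner × Fin 3) (Corner × Fin 3) ℂ :=
  Matrix.of fun p q => if q.1 = barC p.1 then zeta5 p.1 * u p.1 p.2 q.2 else 0

/-- The distance-parity operator `Γ_ε`: the 48×48 block matrix whose `(A,B)`
block is `ε(A) · I₃` if `B = A` and `0` otherwise. -/
def distParity : Matrix (Corner × Fin 3) (Corner × Fin 3) ℂ :=
  Matrix.of fun p q => if q = p then eps p.1 else 0


lemma barC_barC (A : Corner) : barC (barC A) = A := by
  funext μ
  have h : ∀ a : Fin 2, 1 - (1 - a) = a := by decide
  simp [barC, h]

lemma key (a b : Fin 2) :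
    ((-1 : ℂ)) ^ ((1 - a : Fin 2).val + (1 - b : Fin 2).val) = (-1) ^ (a.val + b.val) := by
  fin_cases a <;> fin_cases b <;> norm_num

lemma zeta5_barC (A : Corner) : zeta5 (barC A) = zeta5 A := by
  simp only [zeta5, barC]; exact key _ _

lemma eta5_barC (A : Corner) : eta5 (barC A) = eta5 A := by
  simp only [eta5, barC]; exact key _ _

lemma eta_mul_zeta (A : Corner) : eta5 A * zeta5 A = eps A := by
  simp only [eta5, zeta5, eps, ← pow_add]; ring_nf

/-- generic product computation -/
lemma core (u : Corner → Matrix (Fin 3) (Fin 3) ℂ)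
    (hu : ∀ A, u A ∈ Matrix.unitaryGroup (Fin 3) ℂ)
    (hbar : ∀ A, u (barC A) = (u A)ᴴ) (s t : Corner → ℂ)
    (hst : ∀ A, s A * t (barC A) = eps A) :
    (Matrix.of fun p q : Corner × Fin 3 =>
        if q.1 = barC p.1 then s p.1 * u p.1 p.2 q.2 else 0) *
    (Matrix.of fun p q : Corner × Fin 3 =>
        if q.1 = barC p.1 then t p.1 * u p.1 p.2 q.2 else 0) = distParity := by
  ext ⟨p1, p2⟩ ⟨q1, q2⟩
  rw [Matrix.mul_apply, Fintype.sum_prod_type]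
  simp only [of_apply, ite_mul, zero_mul, mul_ite, mul_zero]
  rw [Finset.sum_eq_single (barC p1)
      (fun x _ hx => by simp [if_neg hx])
      (fun hx => absurd (Finset.mem_univ _) hx)]
  simp only [barC_barC, if_pos rfl]
  have hU : u p1 * (u p1)ᴴ = 1 := (Matrix.mem_unitaryGroup_iff).mp (hu p1)
  by_cases h : q1 = p1
  · subst h
    simp only [eq_self_iff_true, if_true]
    have : ∑ j, s q1 * u q1 p2 j * (t (barC q1) * u (barC q1) j q2)
        = eps q1 * ((u q1) * (u q1)ᴴ) p2 q2 := by
      rw [Matrix.mul_apply, Finset.mul_sum, ← hst q1]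
      congr 1; funext j
      rw [hbar]; ring
    rw [this, hU, Matrix.one_apply, distParity, of_apply]
    by_cases h2 : q2 = p2
    · subst h2; simp
    · rw [if_neg (fun hh => h2 hh.symm), mul_zero, if_neg (by simp [h2])]
  · simp only [if_neg h, Finset.sum_const_zero, distParity, of_apply]
    rw [if_neg (by simp [h])]

/-- **Theorem 3**: `[γ₅⊗1]·[1⊗ξ₅] = [1⊗ξ₅]·[γ₅⊗1] = Γ_ε`. -/
theorem chirality_mul_shiftOp (u : Corner → Matrix (Fin 3) (Fin 3) ℂ)
    (hu : ∀ A, u A ∈ Matrix.unitaryGroup (Fin 3) ℂ)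
    (hbar : ∀ A, u (barC A) = (u A)ᴴ) :
    chirality u * shiftOp u = distParity ∧ shiftOp u * chirality u = distParity := by
  constructor
  · exact core u hu hbar eta5 zeta5 (fun A => by rw [zeta5_barC]; exact eta_mul_zeta A)
  · exact core u hu hbar zeta5 eta5
      (fun A => by rw [eta5_barC, mul_comm]; exact eta_mul_zeta A)
end
end

section
/- Only zero modes contribute to the topological charge (finite-dimensional index identity): let V be a finite-dimensional complex inner product space, D a skew-adjoint operator on V (D* = −D), Γ a self-adjoint unitary operator on V (Γ* = Γ, Γ² = id) with ΓD = −DΓ, and m a nonzero real number. Then D + m·id is invertible and m · Tr(Γ ∘ (D + m·id)⁻¹) = Tr(Γ ∘ P), where P is the orthogonal projection of V onto ker D; in particular the left-hand side is independent of m. -/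
/-!
Cyclicity of the trace and `ΓD = -DΓ` give `Tr(Γ D X) = -Tr(Γ D X)` whenever `X` commutes
with `D`, so such traces vanish. Taking `X = (D + m)⁻¹` in
`m (D + m)⁻¹ = 1 - D (D + m)⁻¹` yields `m Tr(Γ (D + m)⁻¹) = Tr Γ`. Since `D` is skew-adjoint,
`(ker D)ᗮ = range D`, so `D + P` is invertible and `1 - P = D (D + P)⁻¹`; taking
`X = (D + P)⁻¹` yields `Tr Γ = Tr(Γ P)`.
-/

open LinearMap

theorem Commute.ringInverse_right {M₀ : Type*} [MonoidWithZero M₀] {a b : M₀}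
    (h : Commute a b) (hb : IsUnit b) : Commute a (Ring.inverse b) := by
  obtain ⟨u, rfl⟩ := hb
  rw [Ring.inverse_unit]
  exact h.units_inv_right

section Ring

variable {R : Type*} [Ring R] {D P : R}

theorem ringInverse_add_mul_eq_one_sub (hDP : D * P = 0) (hP : P * P = P)
    (hu : IsUnit (D + P)) : Ring.inverse (D + P) * D = 1 - P :=
  calc Ring.inverse (D + P) * D = Ring.inverse (D + P) * ((D + P) * (1 - P)) := by
        simp only [mul_sub, add_mul, mul_one, hDP, hP, zero_add, add_sub_cancel_right]
    _ = 1 - P := Ring.inverse_mul_cancel_left _ _ hu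

theorem mul_ringInverse_add_eq_one_sub (hPD : P * D = 0) (hP : P * P = P)
    (hu : IsUnit (D + P)) : D * Ring.inverse (D + P) = 1 - P :=
  calc D * Ring.inverse (D + P) = (1 - P) * (D + P) * Ring.inverse (D + P) := by
        simp only [sub_mul, mul_add, one_mul, hPD, hP, sub_zero, sub_self, add_zero]
    _ = 1 - P := Ring.mul_inverse_cancel_right _ _ hu

end Ring

section Trace

variable {K M : Type*} [CommRing K] [NoZeroDivisors K] [CharZero K] [AddCommGroup M] [Module K M]

theorem trace_mul_mul_eq_zero_of_anticommute {Γ D X : Module.End K M}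
    (hanti : Γ * D = -(D * Γ)) (hX : Commute D X) : trace K M (Γ * (D * X)) = 0 := by
  have h : trace K M (Γ * (D * X)) = -trace K M (Γ * (D * X)) :=
    calc trace K M (Γ * (D * X)) = trace K M (D * (Γ * X)) := by
          rw [hX.eq, ← mul_assoc, trace_mul_comm]
      _ = -trace K M (Γ * (D * X)) := by
          rw [← mul_assoc, ← neg_neg (D * Γ), ← hanti, neg_mul, map_neg, mul_assoc]
  exact CharZero.eq_neg_self_iff.mp h

theorem mul_trace_mul_ringInverse_add_smul_one {Γ D : Module.End K M} {c : K}
    (hanti : Γ * D = -(D * Γ)) (hu : IsUnit (D + c • 1)) :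
    c * trace K M (Γ * Ring.inverse (D + c • 1)) = trace K M Γ := by
  set R := Ring.inverse (D + c • 1)
  have hDR : Commute D R :=
    ((Commute.refl D).add_right ((Commute.one_right D).smul_right c)).ringInverse_right hu
  have hsplit : c • (Γ * R) = Γ - Γ * (D * R) := by
    rw [← mul_smul_comm, ← smul_one_mul, ← add_sub_cancel_left D (c • 1), sub_mul,
      Ring.mul_inverse_cancel _ hu, mul_sub, mul_one]
  rw [← smul_eq_mul, ← map_smul, hsplit, map_sub,
    trace_mul_mul_eq_zero_of_anticommute hanti hDR, sub_zero]

theorem trace_eq_trace_mul_of_anticommute {Γ D P : Module.End K M}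
    (hanti : Γ * D = -(D * Γ)) (hDP : D * P = 0) (hPD : P * D = 0) (hP : P * P = P)
    (hu : IsUnit (D + P)) : trace K M Γ = trace K M (Γ * P) := by
  have hDB : Commute D (Ring.inverse (D + P)) :=
    (mul_ringInverse_add_eq_one_sub hPD hP hu).trans
      (ringInverse_add_mul_eq_one_sub hDP hP hu).symm
  have h : trace K M Γ - trace K M (Γ * P) = 0 :=
    calc trace K M Γ - trace K M (Γ * P) = trace K M (Γ * (1 - P)) := by
          rw [mul_sub, mul_one, map_sub]
      _ = trace K M (Γ * (D * Ring.inverse (D + P))) := by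
          rw [mul_ringInverse_add_eq_one_sub hPD hP hu]
      _ = 0 := trace_mul_mul_eq_zero_of_anticommute hanti hDB
  exact sub_eq_zero.mp h

end Trace

theorem isUnit_add_of_mul_eq_zero {K M : Type*} [Field K] [AddCommGroup M] [Module K M]
    [FiniteDimensional K M] {D P : Module.End K M} (hPD : P * D = 0) (hP : P * P = P)
    (hfix : ∀ x, D x = 0 → P x = x) : IsUnit (D + P) := by
  rw [isUnit_iff_ker_eq_bot, ker_eq_bot']
  intro x hx
  have hPx : P x = 0 :=
    calc P x = (P * (D + P)) x := by rw [mul_add, hPD, hP, zero_add]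
      _ = 0 := by rw [Module.End.mul_apply, hx, map_zero]
  have hDx : D x = 0 := by simpa [hPx] using hx
  rw [← hfix x hDx, hPx]

section InnerProduct

variable {𝕜 E : Type*} [RCLike 𝕜] [NormedAddCommGroup E] [InnerProductSpace 𝕜 E]
  [FiniteDimensional 𝕜 E] {D : Module.End 𝕜 E}

open RCLike

theorem re_inner_apply_self_eq_zero_of_adjoint_eq_neg (hD : adjoint D = -D) (x : E) :
    re (inner 𝕜 (D x) x) = 0 := by
  have h : inner 𝕜 (D x) x = -(starRingEnd 𝕜) (inner 𝕜 (D x) x) :=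
    calc inner 𝕜 (D x) x = inner 𝕜 x (adjoint D x) := (adjoint_inner_right D x x).symm
      _ = -(starRingEnd 𝕜) (inner 𝕜 (D x) x) := by
        rw [hD, LinearMap.neg_apply, inner_neg_right, inner_conj_symm]
  have := congrArg re h
  rw [map_neg, conj_re] at this
  linarith

theorem isUnit_add_smul_one_of_adjoint_eq_neg (hD : adjoint D = -D) {c : 𝕜} (hc : re c ≠ 0) :
    IsUnit (D + c • 1) := by
  rw [isUnit_iff_ker_eq_bot, ker_eq_bot']
  intro x hx
  have h : re c * ‖x‖ ^ 2 = 0 := by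
    have := congrArg re (congrArg (inner 𝕜 · x) hx)
    simpa [inner_add_left, inner_smul_left, re_inner_apply_self_eq_zero_of_adjoint_eq_neg hD,
      inner_self_eq_norm_sq_to_K] using this
  simpa [hc] using h

theorem orthogonal_ker_eq_range_of_adjoint_eq_neg (hD : adjoint D = -D) : (ker D)ᗮ = range D := by
  rw [orthogonal_ker, hD, range_neg]

theorem trace_eq_trace_mul_starProjection_ker {Γ : Module.End 𝕜 E} (hD : adjoint D = -D)
    (hanti : Γ * D = -(D * Γ)) :
    trace 𝕜 E Γ = trace 𝕜 E (Γ * ((ker D).starProjection : E →ₗ[𝕜] E)) := by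
  set P : Module.End 𝕜 E := ((ker D).starProjection : E →ₗ[𝕜] E)
  have hDP : D * P = 0 := ext fun x ↦ (ker D).starProjection_apply_mem x
  have hPD : P * D = 0 := ext fun x ↦ ((ker D).starProjection_apply_eq_zero_iff).mpr
    (orthogonal_ker_eq_range_of_adjoint_eq_neg hD ▸ mem_range_self D x)
  have hfix : ∀ x, D x = 0 → P x = x := fun x hx ↦ Submodule.starProjection_eq_self_iff.mpr hx
  have hP : P * P = P := ext fun x ↦ hfix (P x) (by rw [← Module.End.mul_apply, hDP]; rfl)
  exact trace_eq_trace_mul_of_anticommute hanti hDP hPD hP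
    (isUnit_add_of_mul_eq_zero hPD hP hfix)

end InnerProduct

theorem index_identity_general {V : Type*} [NormedAddCommGroup V]
    [InnerProductSpace ℂ V] [FiniteDimensional ℂ V]
    (D Γ : Module.End ℂ V)
    (hD : LinearMap.adjoint D = -D)
    (hanti : Γ * D = -(D * Γ))
    (m : ℝ) (hm : m ≠ 0) :
    IsUnit (D + (m : ℂ) • (1 : Module.End ℂ V)) ∧
      (m : ℂ) * LinearMap.trace ℂ V (Γ * Ring.inverse (D + (m : ℂ) • 1)) =
        LinearMap.trace ℂ V
          (Γ * ((LinearMap.ker D).subtype ∘ₗ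
            (Submodule.orthogonalProjectionOnto (LinearMap.ker D)).toLinearMap)) := by
  have hunit : IsUnit (D + (m : ℂ) • 1) :=
    isUnit_add_smul_one_of_adjoint_eq_neg hD (by simpa using hm)
  refine ⟨hunit, ?_⟩
  rw [mul_trace_mul_ringInverse_add_smul_one hanti hunit]
  exact trace_eq_trace_mul_starProjection_ker hD hanti

/-- Finite-dimensional index identity: only zero modes contribute. -/
theorem index_identity {V : Type*} [NormedAddCommGroup V]
    [InnerProductSpace ℂ V] [FiniteDimensional ℂ V]
    (D Γ : Module.End ℂ V)
    (hD : LinearMap.adjoint D = -D)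
    (hΓa : LinearMap.adjoint Γ = Γ) (hΓu : Γ * Γ = 1)
    (hanti : Γ * D = -(D * Γ))
    (m : ℝ) (hm : m ≠ 0) :
    IsUnit (D + (m : ℂ) • (1 : Module.End ℂ V)) ∧
      (m : ℂ) * LinearMap.trace ℂ V (Γ * Ring.inverse (D + (m : ℂ) • 1)) =
        LinearMap.trace ℂ V
          (Γ * ((LinearMap.ker D).subtype ∘ₗ
            (Submodule.orthogonalProjectionOnto (LinearMap.ker D)).toLinearMap)) :=
  index_identity_general D Γ hD hanti m hm
end

section
/- Chiral Ward identity for leakage amplitudes: let H be a finite-dimensional complex inner product space, let G and X be self-adjoint operators on H, and let E be a self-adjoint unitary operator on H satisfying GE = EG = X. Suppose f₊, f₋, h₊, h₋ ∈ H and real numbers θ, φ satisfy E f₊ = e^{iθ} f₋ and E h₊ = e^{iφ} h₋. Then |⟨f₊, G h₊⟩| = |⟨f₋, X h₊⟩| = |⟨f₊, X h₋⟩| = |⟨f₋, G h₋⟩| = |⟨h₊, G f₊⟩| = |⟨h₋, X f₊⟩| = |⟨h₊, X f₋⟩| = |⟨h₋, G f₋⟩|. -/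
/-!
`E` is a self-adjoint involution, so it can be moved across the inner product, and it
intertwines `G` and `X` (`EG = GE = X` forces `EX = XE = G`). Moving `E` onto an
eigenvector turns it into its partner up to a unimodular phase, which the absolute value
does not see; self-adjointness of `G` exchanges the roles of `f` and `h`.
-/

open scoped InnerProductSpace

section

variable {𝕜 V : Type*} [RCLike 𝕜] [NormedAddCommGroup V] [InnerProductSpace 𝕜 V]

lemma norm_inner_smul_left_of_norm_eq_one {c : 𝕜} (hc : ‖c‖ = 1) (x y : V) :
    ‖⟪c • x, y⟫_𝕜‖ = ‖⟪x, y⟫_𝕜‖ := by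
  rw [inner_smul_left, norm_mul, RCLike.norm_conj, hc, one_mul]

lemma norm_inner_smul_right_of_norm_eq_one {c : 𝕜} (hc : ‖c‖ = 1) (x y : V) :
    ‖⟪x, c • y⟫_𝕜‖ = ‖⟪x, y⟫_𝕜‖ := by
  rw [inner_smul_right, norm_mul, hc, one_mul]

lemma LinearMap.IsSymmetric.norm_inner_map_comm {T : V →ₗ[𝕜] V} (hT : T.IsSymmetric)
    (x y : V) : ‖⟪x, T y⟫_𝕜‖ = ‖⟪y, T x⟫_𝕜‖ := by
  rw [← hT, ← inner_conj_symm, RCLike.norm_conj]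

theorem norm_inner_eq_of_involution_intertwines {G X E : V →ₗ[𝕜] V} (hE : E.IsSymmetric)
    (hEE : E ∘ₗ E = LinearMap.id) (hGE : G ∘ₗ E = X) (hEG : E ∘ₗ G = X)
    {fp fm hp hm : V} {c d : 𝕜} (hc : ‖c‖ = 1) (hd : ‖d‖ = 1)
    (hf : E fp = c • fm) (hh : E hp = d • hm) :
    ‖⟪fm, X hp⟫_𝕜‖ = ‖⟪fp, G hp⟫_𝕜‖ ∧
    ‖⟪fp, X hm⟫_𝕜‖ = ‖⟪fp, G hp⟫_𝕜‖ ∧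
    ‖⟪fm, G hm⟫_𝕜‖ = ‖⟪fp, G hp⟫_𝕜‖ := by
  have hEE' (v : V) : E (E v) = v := LinearMap.congr_fun hEE v
  have hGE' (v : V) : G (E v) = X v := LinearMap.congr_fun hGE v
  have hEG' (v : V) : E (G v) = X v := LinearMap.congr_fun hEG v
  have hEX (v : V) : E (X v) = G v := by rw [← hEG', hEE']
  have hXE (v : V) : X (E v) = G v := by rw [← hGE', hEE']
  have move_E (y : V) : ‖⟪fm, y⟫_𝕜‖ = ‖⟪fp, E y⟫_𝕜‖ := by
    rw [← hE, hf, norm_inner_smul_left_of_norm_eq_one hc]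
  have hXm : ‖⟪fp, X hm⟫_𝕜‖ = ‖⟪fp, G hp⟫_𝕜‖ := by
    rw [← hXE, hh, map_smul, norm_inner_smul_right_of_norm_eq_one hd]
  exact ⟨by rw [move_E, hEX], hXm, by rw [move_E, hEG', hXm]⟩

end

theorem ward_identity_leakage_general {H : Type*} [NormedAddCommGroup H]
    [InnerProductSpace ℂ H] [FiniteDimensional ℂ H]
    (G X E : H →ₗ[ℂ] H)
    (hG : LinearMap.adjoint G = G)
    (hEa : LinearMap.adjoint E = E) (hEu : E ∘ₗ E = LinearMap.id)
    (hGE : G ∘ₗ E = X) (hEG : E ∘ₗ G = X)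
    (fp fm hp hm : H) (θ φ : ℝ)
    (hf : E fp = Complex.exp (Complex.I * (θ : ℂ)) • fm)
    (hh : E hp = Complex.exp (Complex.I * (φ : ℂ)) • hm) :
    ‖⟪fp, G hp⟫_ℂ‖ = ‖⟪fm, X hp⟫_ℂ‖ ∧
    ‖⟪fm, X hp⟫_ℂ‖ = ‖⟪fp, X hm⟫_ℂ‖ ∧
    ‖⟪fp, X hm⟫_ℂ‖ = ‖⟪fm, G hm⟫_ℂ‖ ∧
    ‖⟪fm, G hm⟫_ℂ‖ = ‖⟪hp, G fp⟫_ℂ‖ ∧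
    ‖⟪hp, G fp⟫_ℂ‖ = ‖⟪hm, X fp⟫_ℂ‖ ∧
    ‖⟪hm, X fp⟫_ℂ‖ = ‖⟪hp, X fm⟫_ℂ‖ ∧
    ‖⟪hp, X fm⟫_ℂ‖ = ‖⟪hm, G fm⟫_ℂ‖ := by
  have hEs : E.IsSymmetric :=
    (LinearMap.isSymmetric_iff_isSelfAdjoint E).2 (LinearMap.isSelfAdjoint_iff'.2 hEa)
  have hGs : G.IsSymmetric :=
    (LinearMap.isSymmetric_iff_isSelfAdjoint G).2 (LinearMap.isSelfAdjoint_iff'.2 hG)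
  obtain ⟨f₁, f₂, f₃⟩ := norm_inner_eq_of_involution_intertwines hEs hEu hGE hEG
    (Complex.norm_exp_I_mul_ofReal θ) (Complex.norm_exp_I_mul_ofReal φ) hf hh
  obtain ⟨h₁, h₂, h₃⟩ := norm_inner_eq_of_involution_intertwines hEs hEu hGE hEG
    (Complex.norm_exp_I_mul_ofReal φ) (Complex.norm_exp_I_mul_ofReal θ) hh hf
  have swap := hGs.norm_inner_map_comm fp hp
  exact ⟨f₁.symm, f₁.trans f₂.symm, f₂.trans f₃.symm, f₃.trans swap,
    h₁.symm, h₁.trans h₂.symm, h₂.trans h₃.symm⟩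

/-- Chiral Ward identity for leakage amplitudes. -/
theorem ward_identity_leakage {H : Type*} [NormedAddCommGroup H]
    [InnerProductSpace ℂ H] [FiniteDimensional ℂ H]
    (G X E : H →ₗ[ℂ] H)
    (hG : LinearMap.adjoint G = G) (hX : LinearMap.adjoint X = X)
    (hEa : LinearMap.adjoint E = E) (hEu : E ∘ₗ E = LinearMap.id)
    (hGE : G ∘ₗ E = X) (hEG : E ∘ₗ G = X)
    (fp fm hp hm : H) (θ φ : ℝ)
    (hf : E fp = Complex.exp (Complex.I * (θ : ℂ)) • fm)
    (hh : E hp = Complex.exp (Complex.I * (φ : ℂ)) • hm) :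
    ‖⟪fp, G hp⟫_ℂ‖ = ‖⟪fm, X hp⟫_ℂ‖ ∧
    ‖⟪fm, X hp⟫_ℂ‖ = ‖⟪fp, X hm⟫_ℂ‖ ∧
    ‖⟪fp, X hm⟫_ℂ‖ = ‖⟪fm, G hm⟫_ℂ‖ ∧
    ‖⟪fm, G hm⟫_ℂ‖ = ‖⟪hp, G fp⟫_ℂ‖ ∧
    ‖⟪hp, G fp⟫_ℂ‖ = ‖⟪hm, X fp⟫_ℂ‖ ∧
    ‖⟪hm, X fp⟫_ℂ‖ = ‖⟪hp, X fm⟫_ℂ‖ ∧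
    ‖⟪hp, X fm⟫_ℂ‖ = ‖⟪hm, G fm⟫_ℂ‖ :=
  ward_identity_leakage_general G X E hG hEa hEu hGE hEG fp fm hp hm θ φ hf hh
end

section
/- Phase of the U(1)_A pairing under even-odd preconditioning: let V_e and V_o be finite-dimensional complex inner product spaces and B : V_o → V_e a linear map. Define D on V_e ⊕ V_o by D(x, y) = (B y, −B* x) and Γ_ε on V_e ⊕ V_o by Γ_ε(x, y) = (x, −y). Let λ be a nonzero real number and g_e ∈ V_e a nonzero vector with B B* g_e = λ² g_e; set g = (g_e, −B* g_e), χ₊ = (D + iλ)g and χ₋ = (D − iλ)g. Then ⟨χ₋, Γ_ε χ₊⟩ / (‖χ₋‖ · ‖χ₊‖) = −(1 + iλ)/(1 − iλ) = exp(i(π + 2·arctan λ)). In particular, the phase θ defined by Γ_ε f₊ = e^{iθ} f₋ for the normalized eigenvectors f₊ = χ₊/‖χ₊‖ obtained with relative even-odd normalization η = 1 satisfies θ = π + 2·arctan λ. -/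
/-!
With `a = B* g_e`, both eigencomponents are multiples of one vector:
`χ₊ = (1 + iλ) (iλ g_e, -a)` and `χ₋ = (1 - iλ) (-iλ g_e, -a)`, while
`Γ_ε (iλ g_e, -a) = -(-iλ g_e, -a)`. Hence `Γ_ε χ₊ = c χ₋` with
`c = -(1 + iλ)/(1 - iλ)`, a number of modulus one, and since `Γ_ε` is an isometry all
claims reduce to this identity. The polar form of `c` is the formula
`arctan λ = -(i/2) log ((1 + iλ)/(1 - iλ))`.
-/

open scoped InnerProductSpace
open Complex

section Parity

variable {E F : Type*} [SeminormedAddCommGroup E] [SeminormedAddCommGroup F]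

def epsilonParity (x : WithLp 2 (E × F)) : WithLp 2 (E × F) :=
  WithLp.toLp 2 (x.fst, -x.snd)

theorem norm_epsilonParity (x : WithLp 2 (E × F)) : ‖epsilonParity x‖ = ‖x‖ := by
  simp only [epsilonParity, WithLp.prod_norm_eq_of_L2, WithLp.toLp_fst, WithLp.toLp_snd, norm_neg]

theorem epsilonParity_smul {𝕜 : Type*} [Semiring 𝕜] [Module 𝕜 E] [Module 𝕜 F]
    (c : 𝕜) (x : WithLp 2 (E × F)) : epsilonParity (c • x) = c • epsilonParity x := by
  rw [epsilonParity, WithLp.smul_fst, WithLp.smul_snd, ← smul_neg, ← Prod.smul_mk,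
    WithLp.toLp_smul, epsilonParity]

theorem epsilonParity_toLp_smul {𝕜 : Type*} [Ring 𝕜] [Module 𝕜 E]
    (s : 𝕜) (u : E) (v : F) :
    epsilonParity (WithLp.toLp 2 (s • u, v)) = -WithLp.toLp 2 ((-s) • u, v) := by
  simp [epsilonParity, ← WithLp.toLp_neg]

end Parity

section Dirac

variable {Ve Vo : Type*}
  [NormedAddCommGroup Ve] [InnerProductSpace ℂ Ve] [FiniteDimensional ℂ Ve]
  [NormedAddCommGroup Vo] [InnerProductSpace ℂ Vo] [FiniteDimensional ℂ Vo]

noncomputable def evenOddDirac (B : Vo →ₗ[ℂ] Ve) (x : WithLp 2 (Ve × Vo)) :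
    WithLp 2 (Ve × Vo) :=
  WithLp.toLp 2 (B x.snd, -LinearMap.adjoint B x.fst)

theorem evenOddDirac_add_smul_eq_smul_toLp (B : Vo →ₗ[ℂ] Ve) {μ s : ℂ} {u : Ve}
    (hu : B (LinearMap.adjoint B u) = μ • u) (hs : s ^ 2 = -μ) :
    evenOddDirac B (WithLp.toLp 2 (u, -LinearMap.adjoint B u)) +
        s • WithLp.toLp 2 (u, -LinearMap.adjoint B u) =
      (1 + s) • WithLp.toLp 2 (s • u, -LinearMap.adjoint B u) := by
  simp only [evenOddDirac, WithLp.toLp_fst, WithLp.toLp_snd, map_neg, hu,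
    ← WithLp.toLp_smul, ← WithLp.toLp_add, Prod.smul_mk, Prod.mk_add_mk]
  rw [show μ = -s ^ 2 by rw [hs, neg_neg]]
  congr 2 <;> module

end Dirac

theorem inner_smul_div_norm_mul_norm_smul {𝕜 E : Type*} [RCLike 𝕜] [NormedAddCommGroup E]
    [InnerProductSpace 𝕜 E] {x : E} (hx : x ≠ 0) {c : 𝕜} (hc : ‖c‖ = 1) :
    ⟪x, c • x⟫_𝕜 / ((‖x‖ : 𝕜) * (‖c • x‖ : 𝕜)) = c := by
  have : (‖x‖ : 𝕜) ≠ 0 := by simpa using hx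
  rw [inner_smul_right, inner_self_eq_norm_sq_to_K, norm_smul, hc, one_mul]
  field_simp

theorem one_add_I_mul_ofReal_ne_zero (x : ℝ) : 1 + I * x ≠ 0 := fun h => by
  simpa using congrArg re h

theorem one_sub_I_mul_ofReal_ne_zero (x : ℝ) : 1 - I * x ≠ 0 := fun h => by
  simpa using congrArg re h

theorem exp_I_mul_pi_add_two_arctan (x : ℝ) :
    exp (I * (Real.pi + 2 * Real.arctan x)) = -((1 + I * x) / (1 - I * x)) := by
  have hquot : (1 + x * I) / (1 - x * I) ≠ 0 := by
    rw [mul_comm (x : ℂ)]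
    exact div_ne_zero (one_add_I_mul_ofReal_ne_zero x) (one_sub_I_mul_ofReal_ne_zero x)
  have harg : I * (Real.pi + 2 * Real.arctan x) =
      Real.pi * I + log ((1 + x * I) / (1 - x * I)) := by
    rw [ofReal_arctan, arctan]
    linear_combination (-log ((1 + x * I) / (1 - x * I))) * I_sq
  rw [harg, exp_add, exp_pi_mul_I, exp_log hquot, mul_comm (x : ℂ)]
  ring

/-- Phase of the `U(1)_A` pairing under even-odd preconditioning. -/
theorem u1A_pairing_phase {Ve Vo : Type*}
    [NormedAddCommGroup Ve] [InnerProductSpace ℂ Ve] [FiniteDimensional ℂ Ve]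
    [NormedAddCommGroup Vo] [InnerProductSpace ℂ Vo] [FiniteDimensional ℂ Vo]
    (B : Vo →ₗ[ℂ] Ve)
    (D Γ : WithLp 2 (Ve × Vo) → WithLp 2 (Ve × Vo))
    (hD : ∀ x : WithLp 2 (Ve × Vo),
      D x = (WithLp.equiv 2 (Ve × Vo)).symm
        (B ((WithLp.equiv 2 (Ve × Vo)) x).2,
          -(LinearMap.adjoint B ((WithLp.equiv 2 (Ve × Vo)) x).1)))
    (hΓ : ∀ x : WithLp 2 (Ve × Vo),
      Γ x = (WithLp.equiv 2 (Ve × Vo)).symm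
        (((WithLp.equiv 2 (Ve × Vo)) x).1, -((WithLp.equiv 2 (Ve × Vo)) x).2))
    (lam : ℝ) (hlam : lam ≠ 0) (g_e : Ve) (hge0 : g_e ≠ 0)
    (hge : B (LinearMap.adjoint B g_e) = ((lam : ℂ) ^ 2) • g_e)
    (g χp χm : WithLp 2 (Ve × Vo))
    (hg : g = (WithLp.equiv 2 (Ve × Vo)).symm (g_e, -(LinearMap.adjoint B g_e)))
    (hχp : χp = D g + (Complex.I * (lam : ℂ)) • g)
    (hχm : χm = D g - (Complex.I * (lam : ℂ)) • g) :
    ⟪χm, Γ χp⟫_ℂ / ((‖χm‖ : ℂ) * (‖χp‖ : ℂ)) =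
        -((1 + Complex.I * (lam : ℂ)) / (1 - Complex.I * (lam : ℂ))) ∧
      -((1 + Complex.I * (lam : ℂ)) / (1 - Complex.I * (lam : ℂ))) =
        Complex.exp (Complex.I * ((Real.pi : ℂ) + 2 * (Real.arctan lam : ℂ))) ∧
      Γ (((‖χp‖ : ℂ))⁻¹ • χp) =
        Complex.exp (Complex.I * ((Real.pi : ℂ) + 2 * (Real.arctan lam : ℂ))) •
          (((‖χm‖ : ℂ))⁻¹ • χm) := by
  obtain rfl : D = evenOddDirac B := funext hD
  obtain rfl : Γ = epsilonParity := funext hΓ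
  rw [WithLp.equiv_symm_apply] at hg
  set w : ℂ → WithLp 2 (Ve × Vo) :=
    fun s => WithLp.toLp 2 (s • g_e, -LinearMap.adjoint B g_e)
  have hχp_eq : χp = (1 + I * lam) • w (I * lam) := by
    rw [hχp, hg,
      evenOddDirac_add_smul_eq_smul_toLp B hge (by linear_combination lam ^ 2 * I_sq)]
  have hχm_eq : χm = (1 - I * lam) • w (-(I * lam)) := by
    rw [hχm, hg, sub_eq_add_neg, ← neg_smul,
      evenOddDirac_add_smul_eq_smul_toLp B hge (by linear_combination lam ^ 2 * I_sq),
      ← sub_eq_add_neg]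
  set c := exp (I * (Real.pi + 2 * Real.arctan lam)) with hc_def
  have hc : ‖c‖ = 1 := by
    rw [hc_def]; exact_mod_cast norm_exp_I_mul_ofReal (Real.pi + 2 * Real.arctan lam)
  have hΓχ : epsilonParity χp = c • χm := by
    have := one_sub_I_mul_ofReal_ne_zero lam
    rw [hc_def, exp_I_mul_pi_add_two_arctan, hχp_eq, hχm_eq, epsilonParity_smul,
      epsilonParity_toLp_smul, smul_smul, smul_neg, ← neg_smul]
    congr 1
    field_simp
  have hχm0 : χm ≠ 0 := by
    refine hχm_eq ▸ smul_ne_zero (one_sub_I_mul_ofReal_ne_zero lam) fun h => hge0 ?_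
    simpa [w, hlam] using congrArg WithLp.fst h
  have hnorm : ‖χp‖ = ‖χm‖ := by
    rw [← norm_epsilonParity, hΓχ, norm_smul, hc, one_mul]
  refine ⟨?_, (exp_I_mul_pi_add_two_arctan lam).symm, ?_⟩
  · rw [← exp_I_mul_pi_add_two_arctan, ← hc_def, ← norm_epsilonParity χp, hΓχ]
    exact inner_smul_div_norm_mul_norm_smul hχm0 hc
  · rw [epsilonParity_smul, hΓχ, hnorm, smul_comm]
end
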